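/- The query language of warded sets of TGDs with conjunctive queries is strictly more expressive than Datalog with respect to program expressive power: DATALOG <_pep (WARD, CQ). -/

import Mathlib

/-! ### Core: terms, atoms, TGDs, CQs, certain answers -/

/-- Terms: constants ⊕ nulls ⊕ variables (each indexed by a natural number). -/
abbrev Term' : Type := ℕ ⊕ ℕ ⊕ ℕ

/-- The constant `n`. -/
def Term'.cst (n : ℕ) : Term' := Sum.inl n
/-- The labeled null `n`. -/
def Term'.nul (n : ℕ) : Term' := Sum.inr (Sum.inl n)
/-- The variable `n`. -/
def Term'.var (n : ℕ) : Term' := Sum.inr (Sum.inr n)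

def Term'.isVarB : Term' → Bool
  | Sum.inr (Sum.inr _) => true
  | _ => false

def Term'.isConstB : Term' → Bool
  | Sum.inl _ => true
  | _ => false

def Term'.isNullB : Term' → Bool
  | Sum.inr (Sum.inl _) => true
  | _ => false

/-- A (relational) atom: a predicate symbol together with a list of argument terms. -/
abbrev Atom : Type := ℕ × List Term'

/-- Apply a substitution to an atom. -/
def mapAtom (h : Term' → Term') (a : Atom) : Atom := (a.1, a.2.map h)

/-- A substitution is the identity on constants. -/
def constPres (h : Term' → Term') : Prop := ∀ n, h (Term'.cst n) = Term'.cst n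

/-- The variable `v` occurs in the set of atoms `A`. -/
def occursIn (A : Finset Atom) (v : ℕ) : Prop := ∃ a ∈ A, Term'.var v ∈ a.2

/-- A fact is an atom that contains only constants. -/
def isFact (a : Atom) : Prop := ∀ t ∈ a.2, Term'.isConstB t = true

/-- A tuple-generating dependency (TGD) `body → ∃ z̄ head`; the existentially
quantified variables are exactly the head variables not occurring in the body. -/
structure TGD where
  body : Finset Atom
  head : Finset Atom
deriving DecidableEq

/-- A TGD is well-formed if its body and head contain only variables
(no constants and no nulls). -/
def TGD.wf (σ : TGD) : Prop := ∀ a ∈ σ.body ∪ σ.head, ∀ t ∈ a.2, Term'.isVarB t = true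

/-- `v` is an existentially quantified variable of `σ`. -/
def isExistVar (σ : TGD) (v : ℕ) : Prop := occursIn σ.head v ∧ ¬ occursIn σ.body v

/-- An instance `I` (a set of atoms) satisfies a TGD: every homomorphism of the body
into `I` extends (on the body variables, in particular on the frontier) to a
homomorphism of the head into `I`. -/
def satTGD (I : Set Atom) (σ : TGD) : Prop :=
  ∀ h : Term' → Term', constPres h → (∀ a ∈ σ.body, mapAtom h a ∈ I) →
    ∃ h' : Term' → Term', constPres h' ∧
      (∀ v, occursIn σ.body v → h' (Term'.var v) = h (Term'.var v)) ∧
      (∀ a ∈ σ.head, mapAtom h' a ∈ I)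

/-- A conjunctive query: a tuple of output terms and a finite set of body atoms. -/
structure CQ where
  output : List Term'
  atoms : Finset Atom
deriving DecidableEq

/-- Well-formed CQ: no nulls in the atoms, and the output tuple consists of variables. -/
def CQ.wf (q : CQ) : Prop :=
  (∀ a ∈ q.atoms, ∀ t ∈ a.2, Term'.isNullB t = false) ∧
  (∀ t ∈ q.output, Term'.isVarB t = true)

/-- The evaluation `q(I)` of a CQ over an instance: all tuples of constants obtained as
homomorphic images of the output tuple. -/
def CQ.eval (q : CQ) (I : Set Atom) : Set (List ℕ) :=
  { c | ∃ h : Term' → Term', constPres h ∧ (∀ a ∈ q.atoms, mapAtom h a ∈ I) ∧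
        q.output.map h = c.map Term'.cst }

/-- The certain answers to `q` w.r.t. the database `D` and the set `S` of TGDs. -/
def cert (q : CQ) (D : Finset Atom) (S : Finset TGD) : Set (List ℕ) :=
  { c | ∀ I : Set Atom, ↑D ⊆ I → (∀ σ ∈ S, satTGD I σ) → c ∈ q.eval I }

/-- The active domain of a database: all constants occurring in it. -/
def adom (D : Finset Atom) : Set ℕ := { n | ∃ a ∈ D, Term'.cst n ∈ a.2 }

/-! ### Wardedness, piece-wise linearity, predicate levels -/

/-- The predicate `p` occurs in the set of atoms `A`. -/
def occursPredIn (A : Finset Atom) (p : ℕ) : Prop := ∃ a ∈ A, a.1 = p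

/-- The affected positions of (the schema of) `S`: `Affected S p i` says that the
`i`-th position of predicate `p` is affected. -/
inductive Affected (S : Finset TGD) : ℕ → ℕ → Prop
  | base (σ : TGD) (hσ : σ ∈ S) (v : ℕ) (hv : isExistVar σ v)
      (a : Atom) (ha : a ∈ σ.head) (i : ℕ) (hi : a.2[i]? = some (Term'.var v)) :
      Affected S a.1 i
  | step (σ : TGD) (hσ : σ ∈ S) (v : ℕ)
      (hb : occursIn σ.body v) (hh : occursIn σ.head v)
      (hall : ∀ b ∈ σ.body, ∀ j : ℕ, b.2[j]? = some (Term'.var v) → Affected S b.1 j)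
      (a : Atom) (ha : a ∈ σ.head) (i : ℕ) (hi : a.2[i]? = some (Term'.var v)) :
      Affected S a.1 i

/-- A body variable of `σ` is harmless if at least one of its occurrences in the body
is at a non-affected position. -/
def harmless (S : Finset TGD) (σ : TGD) (v : ℕ) : Prop :=
  ∃ b ∈ σ.body, ∃ i : ℕ, b.2[i]? = some (Term'.var v) ∧ ¬ Affected S b.1 i

/-- A body variable is dangerous if it is harmful (not harmless) and is a frontier
variable (it occurs in the head). -/
def dangerous (S : Finset TGD) (σ : TGD) (v : ℕ) : Prop :=
  occursIn σ.body v ∧ occursIn σ.head v ∧ ¬ harmless S σ v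

/-- `S` is warded: each TGD either has no dangerous body variables, or has a body atom
(a ward) containing all dangerous variables and sharing only harmless variables with
the rest of the body. -/
def Warded (S : Finset TGD) : Prop :=
  ∀ σ ∈ S, (∀ v, ¬ dangerous S σ v) ∨
    ∃ α ∈ σ.body, (∀ v, dangerous S σ v → Term'.var v ∈ α.2) ∧
      (∀ v, Term'.var v ∈ α.2 → occursIn (σ.body.erase α) v → harmless S σ v)

/-- Edge of the predicate graph of `S`. -/
def pgEdge (S : Finset TGD) (p r : ℕ) : Prop :=
  ∃ σ ∈ S, occursPredIn σ.body p ∧ occursPredIn σ.head r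

/-- Two predicates are mutually recursive if they lie on a common cycle of the
predicate graph. -/
def mutRec (S : Finset TGD) (p r : ℕ) : Prop :=
  Relation.TransGen (pgEdge S) p r ∧ Relation.TransGen (pgEdge S) r p

/-- `S` is piece-wise linear: each TGD has at most one body atom whose predicate is
mutually recursive with a predicate of its head. -/
def PWL (S : Finset TGD) : Prop :=
  ∀ σ ∈ S, ∀ α ∈ σ.body, ∀ β ∈ σ.body,
    (∃ γ ∈ σ.head, mutRec S α.1 γ.1) → (∃ γ ∈ σ.head, mutRec S β.1 γ.1) → α = β

/-- Every TGD of `S` has exactly one head atom. -/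
def singleHead (S : Finset TGD) : Prop := ∀ σ ∈ S, σ.head.card = 1

/-- The predicates occurring in `S` (as a set). -/
def schP (S : Finset TGD) : Set ℕ :=
  { p | ∃ σ ∈ S, occursPredIn σ.body p ∨ occursPredIn σ.head p }

/-- The predicates occurring in `S` (as a finite set). -/
def schF (S : Finset TGD) : Finset ℕ :=
  S.sup (fun σ => (σ.body ∪ σ.head).image (fun a => a.1))

/-- `lvl` is the (unique) level function of `S`:
`lvl p = max { lvl r | (r,p) an edge of the predicate graph, r not mutually recursive
with p } + 1` (with `max ∅ = 0`). -/
def IsLevelFn (S : Finset TGD) (lvl : ℕ → ℕ) : Prop :=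
  ∀ p ∈ schP S,
    (∀ r, pgEdge S r p → ¬ mutRec S r p → lvl r < lvl p) ∧
    (lvl p = 1 ∨ ∃ r, pgEdge S r p ∧ ¬ mutRec S r p ∧ lvl p = lvl r + 1)

/-- The maximal body size of a TGD of `S`. -/
def maxBody (S : Finset TGD) : ℕ := S.sup (fun σ => σ.body.card)

/-- `f_{WARD∩PWL}(n, S) = (n+1) · max_{P ∈ sch(S)} level(P) · max_{σ ∈ S} |body(σ)|`,
where `n` is the number of atoms of the CQ (resp. the cardinality of the atom set). -/
def fWardPwl (n : ℕ) (S : Finset TGD) (lvl : ℕ → ℕ) : ℕ :=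
  (n + 1) * (schF S).sup lvl * maxBody S

/-- `f_{WARD}(n, S) = 2 · max (n, max_{σ ∈ S} |body(σ)|)`. -/
def fWard (n : ℕ) (S : Finset TGD) : ℕ := 2 * max n (maxBody S)

/-! ### Query languages and expressive power -/

/-- The extensional (database) schema of `S`: the predicates of `sch(S)` not occurring
in any head of `S`. -/
def edbP (S : Finset TGD) : Set ℕ :=
  { p | p ∈ schP S ∧ ∀ σ ∈ S, ¬ occursPredIn σ.head p }

/-- The database `D` is over the set `E` of predicates (and consists of facts). -/
def DBover (D : Finset Atom) (E : Set ℕ) : Prop :=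
  (∀ a ∈ D, isFact a) ∧ (∀ a ∈ D, a.1 ∈ E)

/-- The CQ `q` is over the set `P` of predicates. -/
def CQover (q : CQ) (P : Set ℕ) : Prop := ∀ a ∈ q.atoms, a.1 ∈ P

/-- A query: a (finite) set of TGDs together with a CQ. -/
abbrev Query : Type := Finset TGD × CQ

/-- A well-formed query: the TGDs contain only variables, the CQ is well-formed and
over the schema of the TGDs. -/
def wfQuery (Q : Query) : Prop :=
  (∀ σ ∈ Q.1, TGD.wf σ) ∧ CQ.wf Q.2 ∧ CQover Q.2 (schP Q.1)

/-- The (combined) expressive power of a query `Q = (Σ, q)`: all pairs `(D, c̄)` with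
`D` a database over `edb(Σ)` and `c̄ ∈ adom(D)^{|x̄|}` a certain answer. -/
def ep (Q : Query) : Set (Finset Atom × List ℕ) :=
  { Dc | DBover Dc.1 (edbP Q.1) ∧ Dc.2.length = Q.2.output.length ∧
         (∀ n ∈ Dc.2, n ∈ adom Dc.1) ∧ Dc.2 ∈ cert Q.2 Dc.1 Q.1 }

/-- The combined expressive power of a query language. -/
def cep (L : Set Query) : Set (Set (Finset Atom × List ℕ)) := ep '' L

/-- `L1 ≤_cep L2`. -/
def cepLE (L1 L2 : Set Query) : Prop := cep L1 ⊆ cep L2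

/-- `Q` and `Q'` are equivalent: they evaluate to the same certain answers on every
database over the common extensional schema. -/
def queryEquivOn (Q Q' : Query) : Prop :=
  ∀ D : Finset Atom, DBover D (edbP Q.1 ∩ edbP Q'.1) → cert Q.2 D Q.1 = cert Q'.2 D Q'.1

/-- `L1 ⪯ L2`: every query of `L1` can be equivalently rewritten as a query of `L2`. -/
def langLE (L1 L2 : Set Query) : Prop := ∀ Q ∈ L1, ∃ Q' ∈ L2, queryEquivOn Q Q'

/-- The class of sets of full single-head TGDs (Datalog programs). -/
def FULL1 : Set (Finset TGD) :=
  { S | (∀ σ ∈ S, TGD.wf σ) ∧ ∀ σ ∈ S, σ.head.card = 1 ∧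
        ∀ v, occursIn σ.head v → occursIn σ.body v }

/-- The class of warded sets of TGDs. -/
def WARDc : Set (Finset TGD) := { S | (∀ σ ∈ S, TGD.wf σ) ∧ Warded S }

/-- The class of piece-wise linear sets of TGDs. -/
def PWLc : Set (Finset TGD) := { S | (∀ σ ∈ S, TGD.wf σ) ∧ PWL S }

/-- The query language `(C, CQ)` based on a class `C` of sets of TGDs. -/
def langOf (C : Set (Finset TGD)) : Set Query :=
  { Q | Q.1 ∈ C ∧ CQ.wf Q.2 ∧ CQover Q.2 (schP Q.1) }

/-- The (program) expressive power of a set `S` of TGDs: all triples `(D, q, c̄)` with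
`D` a database over `edb(S)`, `q` a CQ over `sch(S)`, and `c̄ ∈ adom(D)^{|x̄|}` a
certain answer. -/
def epP (S : Finset TGD) : Set (Finset Atom × CQ × List ℕ) :=
  { x | DBover x.1 (edbP S) ∧ CQ.wf x.2.1 ∧ CQover x.2.1 (schP S) ∧
        x.2.2.length = x.2.1.output.length ∧ (∀ n ∈ x.2.2, n ∈ adom x.1) ∧
        x.2.2 ∈ cert x.2.1 x.1 S }

/-- The program expressive power of the query language `(C, CQ)`. -/
def pep (C : Set (Finset TGD)) : Set (Set (Finset Atom × CQ × List ℕ)) := epP '' C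

/-- `(C1, CQ) ≤_pep (C2, CQ)`. -/
def pepLE (C1 C2 : Set (Finset TGD)) : Prop := pep C1 ⊆ pep C2

/-- `C1 ⪯ C2` for classes of TGDs: every `Σ ∈ C1` can be rewritten into some
`Σ' ∈ C2` giving the same certain answers for all databases over the common
extensional schema and all CQs over the common schema. -/
def classLE (C1 C2 : Set (Finset TGD)) : Prop :=
  ∀ S ∈ C1, ∃ S' ∈ C2, ∀ (D : Finset Atom) (q : CQ),
    DBover D (edbP S ∩ edbP S') → CQ.wf q → CQover q (schP S ∩ schP S') →
    cert q D S = cert q D S'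


/-! In a Datalog program there are no existential variables, so no position is affected and
no variable is dangerous; hence `FULL1 ⊆ WARD`. For strictness take the warded program
`P(x) → ∃y R(x,y)` on the database `{P(1)}`: it entails `∃y R(1,y)` but not `∃x R(x,x)`.
A Datalog program entailing `∃y R(1,y)` on `{P(1)}` already does so inside the
active domain `{1}` (full TGDs are preserved under passing to induced subinstances), so
it forces `R(1,1)` and thus `∃x R(x,x)`. -/

lemma Term'.exists_eq_var_of_isVarB {t : Term'} (h : t.isVarB = true) :
    ∃ v, t = Term'.var v := by
  rcases t with n | n | n <;> simp_all [Term'.isVarB, Term'.var]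

lemma not_affected_of_mem_FULL1 {S : Finset TGD} (hS : S ∈ FULL1) {p i : ℕ} :
    ¬ Affected S p i := by
  intro h
  induction h with
  | base σ hσ v hv => exact hv.2 ((hS.2 σ hσ).2 v hv.1)
  | step σ hσ v hb _ _ _ _ _ _ ih =>
    obtain ⟨b, hb, hvb⟩ := hb
    obtain ⟨j, hj, hjv⟩ := List.mem_iff_getElem.mp hvb
    exact ih b hb j (hjv ▸ List.getElem?_eq_getElem hj)

lemma FULL1_subset_WARDc : FULL1 ⊆ WARDc := by
  refine fun S hS => ⟨hS.1, fun σ _ => Or.inl ?_⟩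
  rintro v ⟨⟨b, hb, hvb⟩, -, hharmful⟩
  obtain ⟨j, hj, hjv⟩ := List.mem_iff_getElem.mp hvb
  exact hharmful ⟨b, hb, j, hjv ▸ List.getElem?_eq_getElem hj, not_affected_of_mem_FULL1 hS⟩

lemma pepLE_of_subset {C₁ C₂ : Set (Finset TGD)} (h : C₁ ⊆ C₂) : pepLE C₁ C₂ :=
  Set.image_mono h

def induced (I : Set Atom) (T : Set Term') : Set Atom := {a ∈ I | ∀ t ∈ a.2, t ∈ T}

lemma satTGD_induced {σ : TGD} (hwf : σ.wf)
    (hfull : ∀ v, occursIn σ.head v → occursIn σ.body v) {I : Set Atom} (hI : satTGD I σ)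
    (T : Set Term') : satTGD (induced I T) σ := by
  intro h hcp hbody
  obtain ⟨h', -, hagree, hhead⟩ := hI h hcp fun b hb => (hbody b hb).1
  refine ⟨h, hcp, fun _ _ => rfl, fun a ha => ?_⟩
  have hvar : ∀ t ∈ a.2, ∃ v, t = Term'.var v ∧ occursIn σ.body v := fun t ht => by
    obtain ⟨v, rfl⟩ := Term'.exists_eq_var_of_isVarB (hwf a (Finset.mem_union_right _ ha) t ht)
    exact ⟨v, rfl, hfull v ⟨a, ha, ht⟩⟩
  constructor
  · have hmap : mapAtom h' a = mapAtom h a := by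
      refine congrArg _ (List.map_congr_left fun t ht => ?_)
      obtain ⟨v, rfl, hv⟩ := hvar t ht
      exact hagree v hv
    exact hmap ▸ hhead a ha
  · intro t ht
    obtain ⟨s, hs, rfl⟩ := List.mem_map.mp ht
    obtain ⟨v, rfl, b, hb, hvb⟩ := hvar s hs
    exact (hbody b hb).2 _ (List.mem_map_of_mem hvb)

lemma mem_eval_induced_of_mem_cert {S : Finset TGD} (hS : S ∈ FULL1) {q : CQ} {D : Finset Atom}
    {c : List ℕ} (hc : c ∈ cert q D S) {I : Set Atom} (hDI : ↑D ⊆ I)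
    (hI : ∀ σ ∈ S, satTGD I σ) {T : Set Term'} (hDT : ∀ a ∈ D, ∀ t ∈ a.2, t ∈ T) :
    c ∈ q.eval (induced I T) :=
  hc _ (fun a ha => ⟨hDI ha, hDT a ha⟩) fun σ hσ =>
    satTGD_induced (hS.1 σ hσ) (hS.2 σ hσ).2 (hI σ hσ) T

/-- `P(x) → ∃y R(x,y)`, with `P = 0` and `R = 1`. -/
def tgdExistsR : TGD := ⟨{(0, [Term'.var 0])}, {(1, [Term'.var 0, Term'.var 1])}⟩

def progExistsR : Finset TGD := {tgdExistsR}

def dbP1 : Finset Atom := {(0, [Term'.cst 1])}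

/-- `q(x) = ∃y R(x,y)`. -/
def cqHasR : CQ := ⟨[Term'.var 0], {(1, [Term'.var 0, Term'.var 1])}⟩

/-- `q() = ∃x R(x,x)`. -/
def cqLoopR : CQ := ⟨[], {(1, [Term'.var 0, Term'.var 0])}⟩

lemma progExistsR_mem_WARDc : progExistsR ∈ WARDc := by
  refine ⟨?_, ?_⟩ <;> intro σ hσ <;>
    simp only [progExistsR, Finset.mem_singleton] at hσ <;> subst hσ
  · intro a ha t ht
    simp only [tgdExistsR, Finset.mem_union, Finset.mem_singleton] at ha
    rcases ha with rfl | rfl <;>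
      simp only [List.mem_cons, List.not_mem_nil, or_false] at ht <;>
      rcases ht with rfl | rfl <;> rfl
  · refine Or.inr ⟨(0, [Term'.var 0]), by simp [tgdExistsR], ?_, ?_⟩
    · rintro v ⟨⟨a, ha, hva⟩, -⟩
      simp only [tgdExistsR, Finset.mem_singleton] at ha
      exact ha ▸ hva
    · rintro v - ⟨a, ha, -⟩
      simp [tgdExistsR] at ha

lemma cqHasR_wf : cqHasR.wf := by
  refine ⟨fun a ha t ht => ?_, fun t ht => ?_⟩
  · simp only [cqHasR, Finset.mem_singleton] at ha
    subst ha
    simp only [List.mem_cons, List.not_mem_nil, or_false] at ht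
    rcases ht with rfl | rfl <;> rfl
  · simp only [cqHasR, List.mem_singleton] at ht
    subst ht
    rfl

lemma cqLoopR_wf : cqLoopR.wf := by
  refine ⟨fun a ha t ht => ?_, fun t ht => by simp [cqLoopR] at ht⟩
  simp only [cqLoopR, Finset.mem_singleton] at ha
  subst ha
  simp only [List.mem_cons, List.not_mem_nil, or_false, or_self] at ht
  subst ht
  rfl

lemma mem_epP_progExistsR_cqHasR : (dbP1, cqHasR, [1]) ∈ epP progExistsR := by
  have hP : (0 : ℕ) ∈ schP progExistsR :=
    ⟨tgdExistsR, by simp [progExistsR],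
      Or.inl ⟨(0, [Term'.var 0]), by simp [tgdExistsR], rfl⟩⟩
  refine ⟨⟨?_, ?_⟩, cqHasR_wf, ?_, rfl, by simp [adom, dbP1], ?_⟩
  · intro a ha t ht
    simp only [dbP1, Finset.mem_singleton] at ha
    subst ha
    simp only [List.mem_singleton] at ht
    subst ht
    rfl
  · intro a ha
    simp only [dbP1, Finset.mem_singleton] at ha
    subst ha
    refine ⟨hP, fun σ hσ ⟨b, hb, hb0⟩ => ?_⟩
    simp only [progExistsR, Finset.mem_singleton] at hσ
    subst hσ
    simp only [tgdExistsR, Finset.mem_singleton] at hb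
    simp [hb] at hb0
  · intro a ha
    simp only [cqHasR, Finset.mem_singleton] at ha
    exact ha ▸ ⟨tgdExistsR, by simp [progExistsR],
      Or.inr ⟨(1, [Term'.var 0, Term'.var 1]), by simp [tgdExistsR], rfl⟩⟩
  · intro I hDI hI
    obtain ⟨h, hcp, hagree, hhead⟩ := hI tgdExistsR (by simp [progExistsR])
      (Sum.elim Term'.cst fun _ => Term'.cst 1) (fun _ => rfl) fun a ha => by
        simp only [tgdExistsR, Finset.mem_singleton] at ha
        exact ha ▸ hDI (by simp [dbP1, mapAtom, Term'.var, Term'.cst])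
    have hx : h (Term'.var 0) = Term'.cst 1 :=
      hagree 0 ⟨(0, [Term'.var 0]), by simp [tgdExistsR], by simp⟩
    refine ⟨h, hcp, fun a ha => ?_, by simp [cqHasR, hx]⟩
    simp only [cqHasR, Finset.mem_singleton] at ha
    exact ha ▸ hhead _ (by simp [tgdExistsR])

lemma satTGD_tgdExistsR_nullWitness :
    satTGD {(0, [Term'.cst 1]), (1, [Term'.cst 1, Term'.nul 0])} tgdExistsR := by
  intro h hcp hbody
  have hx : h (Term'.var 0) = Term'.cst 1 := by
    simpa [mapAtom, Term'.cst, Term'.nul] using hbody (0, [Term'.var 0]) (by simp [tgdExistsR])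
  have hne : ∀ t, t ≠ Term'.var 1 → Function.update h (Term'.var 1) (Term'.nul 0) t = h t :=
    fun t ht => Function.update_of_ne ht _ _
  refine ⟨Function.update h (Term'.var 1) (Term'.nul 0), fun n => ?_, fun v hv => ?_,
    fun a ha => ?_⟩
  · rw [hne _ (by simp [Term'.cst, Term'.var]), hcp n]
  · obtain ⟨b, hb, hvb⟩ := hv
    simp only [tgdExistsR, Finset.mem_singleton] at hb
    subst hb
    obtain rfl : v = 0 := by simpa [Term'.var] using hvb
    exact hne _ (by simp [Term'.var])
  · simp only [tgdExistsR, Finset.mem_singleton] at ha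
    subst ha
    simp only [mapAtom, List.map, Function.update_self, hne (Term'.var 0) (by simp [Term'.var]), hx]
    simp

lemma not_mem_cert_cqLoopR : [] ∉ cert cqLoopR dbP1 progExistsR := by
  intro hc
  obtain ⟨h, -, hmatch, -⟩ := hc {(0, [Term'.cst 1]), (1, [Term'.cst 1, Term'.nul 0])}
    (by simp [dbP1]) (by simpa [progExistsR] using satTGD_tgdExistsR_nullWitness)
  have hloop := hmatch (1, [Term'.var 0, Term'.var 0]) (by simp [cqLoopR])
  simp only [mapAtom, List.map, Set.mem_insert_iff, Set.mem_singleton_iff, Prod.mk.injEq,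
    List.cons.injEq] at hloop
  grind [Term'.cst, Term'.nul]

lemma mem_cert_cqLoopR_of_mem_FULL1 {S : Finset TGD} (hS : S ∈ FULL1)
    (hc : [1] ∈ cert cqHasR dbP1 S) : [] ∈ cert cqLoopR dbP1 S := by
  intro I hDI hI
  obtain ⟨h, hcp, hmatch, -⟩ :=
    mem_eval_induced_of_mem_cert hS hc hDI hI (T := {Term'.cst 1}) (by simp [dbP1])
  obtain ⟨hR, hdom⟩ := hmatch (1, [Term'.var 0, Term'.var 1]) (by simp [cqHasR])
  have hx : h (Term'.var 0) = Term'.cst 1 := hdom _ (by simp [mapAtom])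
  have hy : h (Term'.var 1) = Term'.cst 1 := hdom _ (by simp [mapAtom])
  refine ⟨h, hcp, fun a ha => ?_, rfl⟩
  simp only [cqLoopR, Finset.mem_singleton] at ha
  subst ha
  simpa [mapAtom, hx, hy] using hR

lemma epP_ne_progExistsR_of_mem_FULL1 {S : Finset TGD} (hS : S ∈ FULL1) :
    epP S ≠ epP progExistsR := by
  intro heq
  obtain ⟨hD, -, hq, -, -, hc⟩ : (dbP1, cqHasR, [1]) ∈ epP S :=
    heq ▸ mem_epP_progExistsR_cqHasR
  have hloop : (dbP1, cqLoopR, []) ∈ epP S := by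
    refine ⟨hD, cqLoopR_wf, fun a ha => ?_, rfl, by simp, mem_cert_cqLoopR_of_mem_FULL1 hS hc⟩
    simp only [cqLoopR, Finset.mem_singleton] at ha
    exact ha ▸ hq (1, [Term'.var 0, Term'.var 1]) (by simp [cqHasR])
  exact not_mem_cert_cqLoopR (heq ▸ hloop).2.2.2.2.2

/-- `DATALOG <_pep (WARD, CQ)`. -/
theorem datalog_lt_pep_warded :
    pepLE FULL1 WARDc ∧ ¬ pepLE WARDc FULL1 := by
  refine ⟨pepLE_of_subset FULL1_subset_WARDc, fun hle => ?_⟩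
  obtain ⟨S, hS, heq⟩ := hle ⟨progExistsR, progExistsR_mem_WARDc, rfl⟩
  exact epP_ne_progExistsR_of_mem_FULL1 hS heq
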